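/- Let A be a nontrivial group, D a group, C an infinite subgroup of D, and form the restricted wreath products Σ₀ = A ≀ C ≤ Γ₀ = A ≀ D (with base group A^(D) = ⊕_{d∈D} A and Σ₀ = A^(C) ⋊ C). Suppose g ∈ Γ₀ is such that C ∩ g̅Cg̅⁻¹ is finite, where g̅ ∈ D is the image of g under the quotient map Γ₀ → D and g̅ ∉ C. Then the index [Σ₀ : Σ₀ ∩ gΣ₀g⁻¹] is infinite. -/

import Mathlib

/-- The conjugate subgroup `g S g⁻¹`. -/
def conjSub {G : Type*} [Group G] (g : G) (S : Subgroup G) : Subgroup G :=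
  S.map (MulAut.conj g).toMonoidHom

/-- The shift automorphism of the full function group `D → A` given by `d`. -/
def shiftEquiv {A D : Type*} [Group A] [Group D] (d : D) : (D → A) ≃* (D → A) where
  toFun f := fun x => f (d⁻¹ * x)
  invFun f := fun x => f (d * x)
  left_inv f := by funext x; simp [← mul_assoc]
  right_inv f := by funext x; simp [← mul_assoc]
  map_mul' f g := rfl

/-- The shift action of `D` on `D → A` by translation of coordinates. -/
def shift (A D : Type*) [Group A] [Group D] : D →* MulAut (D → A) where
  toFun := shiftEquiv
  map_one' := by
    ext f x
    simp [shiftEquiv]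
  map_mul' d e := by
    ext f x
    simp [shiftEquiv, mul_assoc]

theorem mulSupport_shift {A D : Type*} [Group A] [Group D] (d : D) (f : D → A) :
    Function.mulSupport ((shift A D d) f) =
      (fun x => d⁻¹ * x) ⁻¹' Function.mulSupport f := by
  ext x
  simp [shift, shiftEquiv, Function.mem_mulSupport]

/-- The restricted wreath product `A ≀ D`, as the subgroup of the unrestricted wreath
product `(D → A) ⋊ D` consisting of elements with finitely supported base component. -/
def wrSupp (A D : Type*) [Group A] [Group D] :
    Subgroup ((D → A) ⋊[shift A D] D) where
  carrier := {w | (Function.mulSupport w.left).Finite}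
  one_mem' := by
    simp [Function.mulSupport_one]
  mul_mem' := by
    intro a b ha hb
    rw [Set.mem_setOf_eq, SemidirectProduct.mul_left]
    have h2 : (Function.mulSupport (((shift A D) a.right) b.left)).Finite := by
      rw [mulSupport_shift]
      exact hb.preimage (Set.injOn_of_injective (mul_right_injective _))
    exact (ha.union h2).subset (Function.mulSupport_mul _ _)
  inv_mem' := by
    intro a ha
    rw [Set.mem_setOf_eq, SemidirectProduct.inv_left, mulSupport_shift]
    have : Function.mulSupport (a.left⁻¹) = Function.mulSupport a.left :=
      Function.mulSupport_inv a.left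
    rw [this]
    exact ha.preimage (Set.injOn_of_injective (mul_right_injective _))

/-- The subgroup `A ≀ C = A^(C) ⋊ C` of the wreath product, for a subgroup `C ≤ D`. -/
def wrC (A : Type*) {D : Type*} [Group A] [Group D] (C : Subgroup D) :
    Subgroup ((D → A) ⋊[shift A D] D) where
  carrier := {w | (Function.mulSupport w.left).Finite ∧
    Function.mulSupport w.left ⊆ (C : Set D) ∧ w.right ∈ C}
  one_mem' := by simp [Function.mulSupport_one, C.one_mem]
  mul_mem' := by
    rintro a b ⟨haf, haC, har⟩ ⟨hbf, hbC, hbr⟩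
    have hsf : (Function.mulSupport (((shift A D) a.right) b.left)).Finite := by
      rw [mulSupport_shift]
      exact hbf.preimage (Set.injOn_of_injective (mul_right_injective _))
    have hsC : Function.mulSupport (((shift A D) a.right) b.left) ⊆ (C : Set D) := by
      rw [mulSupport_shift]
      intro x hx
      have h1 : a.right⁻¹ * x ∈ C := hbC hx
      have h2 := C.mul_mem har h1
      simpa [← mul_assoc] using h2
    refine ⟨?_, ?_, ?_⟩
    · rw [SemidirectProduct.mul_left]
      exact (haf.union hsf).subset (Function.mulSupport_mul _ _)
    · rw [SemidirectProduct.mul_left]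
      exact (Function.mulSupport_mul _ _).trans (Set.union_subset haC hsC)
    · rw [SemidirectProduct.mul_right]
      exact C.mul_mem har hbr
  inv_mem' := by
    rintro a ⟨haf, haC, har⟩
    have hs : Function.mulSupport (((shift A D) a.right⁻¹) a.left⁻¹) =
        (fun x => a.right⁻¹⁻¹ * x) ⁻¹' Function.mulSupport a.left := by
      rw [mulSupport_shift]
      ext y
      simp [Function.mem_mulSupport]
    refine ⟨?_, ?_, ?_⟩
    · rw [SemidirectProduct.inv_left, hs]
      exact haf.preimage (Set.injOn_of_injective (mul_right_injective _))
    · rw [SemidirectProduct.inv_left, hs]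
      intro x hx
      have h1 : a.right⁻¹⁻¹ * x ∈ C := haC hx
      have h2 := C.mul_mem (C.inv_mem har) h1
      simpa [← mul_assoc] using h2
    · rw [SemidirectProduct.inv_right]
      exact C.inv_mem har

open Function SemidirectProduct

lemma Subgroup.relIndex_eq_zero_of_forall_inv_mul_mem {G ι : Type*} [Group G] [Infinite ι]
    {H K : Subgroup G} (f : ι → G) (hfK : ∀ i, f i ∈ K)
    (hf : ∀ i j, (f i)⁻¹ * f j ∈ H → i = j) : H.relIndex K = 0 := by
  rw [relIndex, index_eq_zero_iff_infinite]
  refine Infinite.of_injective (fun i => (⟨f i, hfK i⟩ : K)) fun i j hij => hf i j ?_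
  rwa [QuotientGroup.eq, mem_subgroupOf] at hij

lemma mem_conjSub {G : Type*} [Group G] (g w : G) (S : Subgroup G) :
    w ∈ conjSub g S ↔ g⁻¹ * w * g ∈ S :=
  Subgroup.mem_map_equiv

lemma mulSupport_conj {α G : Type*} [Group G] (n f : α → G) :
    mulSupport (n⁻¹ * f * n) = mulSupport f := by
  ext x
  simp only [mem_mulSupport, Pi.mul_apply, Pi.inv_apply, ne_eq, mul_assoc, inv_mul_eq_one,
    right_eq_mul]

section WreathProduct

variable {A D : Type*} [Group A] [Group D]

lemma conj_inl_left (g : (D → A) ⋊[shift A D] D) (f : D → A) :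
    (g⁻¹ * inl f * g).left = shift A D g.right⁻¹ (g.left⁻¹ * f * g.left) := by
  simp [mul_left, inv_left, map_mul]

lemma mulSupport_conj_inl_left (g : (D → A) ⋊[shift A D] D) (f : D → A) :
    mulSupport (g⁻¹ * inl f * g).left = (g.right * ·) ⁻¹' mulSupport f := by
  rw [conj_inl_left, mulSupport_shift, mulSupport_conj, inv_inv]

lemma inl_mulSingle_mem_wrC [DecidableEq D] {C : Subgroup D} {c : D} (hc : c ∈ C) (a : A) :
    inl (Pi.mulSingle c a) ∈ wrC A C := by
  have hsupp : mulSupport (Pi.mulSingle c a : D → A) ⊆ {c} := Pi.mulSupport_mulSingle_subset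
  exact ⟨(Set.finite_singleton c).subset hsupp, hsupp.trans (by simpa using hc), C.one_mem⟩

/-- Conjugating by `g` translates supports by `g.right⁻¹`, and a point of `C` can only be
translated back into `C` if `g.right ∈ C`. -/
lemma inl_notMem_conjSub_wrC {C : Subgroup D} {g : (D → A) ⋊[shift A D] D}
    (hgC : g.right ∉ C) {f : D → A} {c : D} (hc : c ∈ C) (hcf : c ∈ mulSupport f) :
    inl f ∉ conjSub g (wrC A C) := by
  intro hf
  rw [mem_conjSub] at hf
  have hsupp : g.right⁻¹ * c ∈ C := by
    apply hf.2.1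
    rwa [mulSupport_conj_inl_left, Set.mem_preimage, mul_inv_cancel_left]
  exact hgC (by simpa using C.inv_mem (C.mul_mem hsupp (C.inv_mem hc)))

end WreathProduct

theorem stmt12_general {A D : Type*} [Group A] [Group D] (hA : ∃ a : A, a ≠ 1)
    (C : Subgroup D) (hCinf : (C : Set D).Infinite)
    (g : (D → A) ⋊[shift A D] D)
    (hgC : g.right ∉ C) :
    (conjSub g (wrC A C)).relIndex (wrC A C) = 0 := by
  classical
  obtain ⟨a, ha⟩ := hA
  have : Infinite C := hCinf.to_subtype
  refine Subgroup.relIndex_eq_zero_of_forall_inv_mul_mem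
    (fun c : C => inl (Pi.mulSingle (c : D) a)) (fun c => inl_mulSingle_mem_wrC c.2 a) ?_
  intro c c' hcc'
  by_contra hne
  rw [← map_inv, ← map_mul] at hcc'
  refine inl_notMem_conjSub_wrC hgC c'.2 ?_ hcc'
  simp [mem_mulSupport, Pi.mulSingle_eq_of_ne (Subtype.coe_injective.ne (Ne.symm hne)), ha]

/-- If `A` is nontrivial, `C ≤ D` is infinite, `g` lies in the restricted wreath product
`Γ₀ = A ≀ D` with `ḡ = g.right ∉ C` and `C ∩ ḡCḡ⁻¹` finite, then
`[Σ₀ : Σ₀ ∩ gΣ₀g⁻¹] = ∞` for `Σ₀ = A ≀ C`. -/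
theorem stmt12 {A D : Type*} [Group A] [Group D] (hA : ∃ a : A, a ≠ 1)
    (C : Subgroup D) (hCinf : (C : Set D).Infinite)
    (g : (D → A) ⋊[shift A D] D) (hg : g ∈ wrSupp A D)
    (hgC : g.right ∉ C)
    (hfin : ((C ⊓ conjSub g.right C : Subgroup D) : Set D).Finite) :
    (conjSub g (wrC A C)).relIndex (wrC A C) = 0 :=
  stmt12_general hA C hCinf g hgC
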